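/- The Diophantine equation x² + 1 = y^n with integer n ≥ 2 has no solutions in nonzero integers x, y. -/

import Mathlib

/-!
For even `n` the equation says that two squares differ by `1`. For odd `n`, `x` is even, so
`1 + x i` and `1 - x i` are coprime Gaussian integers with product `y ^ n`; since every Gaussian
unit is an `n`-th power, `1 + x i = w ^ n`. As `w.re` divides `(w ^ n).re = 1`, `w = ±(1 + c i)`
and `Re ((1 + c i) ^ n) = ±1`. Lebesgue's argument shows that this forces `c = 0`: for odd `c`
the real part is even, and for even `c` each binomial term `C(n, k) c ^ k` with `k ≥ 3` is
divisible by a higher power of `2` than the quadratic term `C(n, 2) c ^ 2`. Hence `w` is real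
and `x = Im (w ^ n) = 0`.
-/

local notation "ℤ[i]" => GaussianInt

theorem padicValNat_two_choose_two_add_two_lt {k : ℕ} (hk : 3 ≤ k) :
    padicValNat 2 (k.choose 2) + 2 < k := by
  set v := padicValNat 2 (k.choose 2)
  have hdvd : 2 ^ (v + 1) ∣ k * (k - 1) := by
    rw [← Nat.div_two_mul_two_of_even (Nat.even_mul_pred_self k), ← Nat.choose_two_right,
      pow_succ]
    exact Nat.mul_dvd_mul_right pow_padicValNat_dvd 2
  have hle : 2 ^ (v + 1) ≤ k := by
    rcases Nat.even_or_odd k with hk' | hk'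
    · have hodd : Odd (k - 1) := Nat.Even.sub_odd (by omega) hk' odd_one
      exact Nat.le_of_dvd (by omega)
        ((Nat.coprime_two_left.mpr hodd).pow_left _ |>.dvd_of_dvd_mul_right hdvd)
    · exact (Nat.le_of_dvd (by omega)
        ((Nat.coprime_two_left.mpr hk').pow_left _ |>.dvd_of_dvd_mul_left hdvd)).trans (by omega)
  have := Nat.lt_two_pow_self (n := v)
  rw [pow_succ] at hle
  omega

theorem two_pow_padicValNat_succ_dvd_choose_mul_pow {n k c : ℕ} (hc : 2 ∣ c) (hk : 3 ≤ k) :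
    2 ^ (padicValNat 2 (n.choose 2 * c ^ 2) + 1) ∣ n.choose k * c ^ k := by
  rcases Nat.eq_zero_or_pos c with rfl | hc0
  · simp [zero_pow (by omega : k ≠ 0)]
  rcases lt_or_ge n k with hnk | hkn
  · simp [Nat.choose_eq_zero_of_lt hnk]
  have hval : padicValNat 2 (n.choose k) + padicValNat 2 (k.choose 2) =
      padicValNat 2 (n.choose 2) + padicValNat 2 ((n - 2).choose (k - 2)) := by
    rw [← padicValNat.mul (Nat.choose_pos hkn).ne' (Nat.choose_pos (by omega)).ne',
      ← padicValNat.mul (Nat.choose_pos (by omega)).ne' (Nat.choose_pos (by omega)).ne',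
      Nat.choose_mul (by omega)]
  have hvc : 1 ≤ padicValNat 2 c := one_le_padicValNat_of_dvd hc0.ne' hc
  have hk2 := padicValNat_two_choose_two_add_two_lt hk
  rw [padicValNat_dvd_iff_le (Nat.mul_ne_zero (Nat.choose_pos hkn).ne' (by positivity)),
    padicValNat.mul (Nat.choose_pos hkn).ne' (by positivity),
    padicValNat.mul (Nat.choose_pos (by omega)).ne' (by positivity), padicValNat.pow,
    padicValNat.pow]
  obtain ⟨j, rfl⟩ : ∃ j, k = j + 3 := ⟨k - 3, by omega⟩
  have hj : j ≤ j * padicValNat 2 c := Nat.le_mul_of_pos_right j hvc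
  rw [add_mul]
  omega

namespace Zsqrtd

variable {d : ℤ}

theorem im_dvd_im_pow (z : ℤ√d) (n : ℕ) : z.im ∣ (z ^ n).im := by
  induction n with
  | zero => simp
  | succ n ih =>
    rw [pow_succ, im_mul]
    exact dvd_add (dvd_mul_left _ _) (ih.mul_right _)

theorem re_dvd_re_pow_of_odd (z : ℤ√d) {n : ℕ} (hn : Odd n) : z.re ∣ (z ^ n).re := by
  obtain ⟨m, rfl⟩ := hn
  induction m with
  | zero => simp
  | succ m ih =>
    rw [show 2 * (m + 1) + 1 = 2 * m + 1 + 2 by ring, pow_add, re_mul]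
    refine dvd_add (ih.mul_right _) (Dvd.intro (d * (z ^ (2 * m + 1)).im * 2 * z.im) ?_)
    rw [sq, im_mul]
    ring

end Zsqrtd

namespace GaussianInt

theorem pow_four_eq_one_of_isUnit {u : ℤ[i]} (hu : IsUnit u) : u ^ 4 = 1 := by
  have hnorm : u.re * u.re + u.im * u.im = 1 := by
    simpa [Zsqrtd.norm_def] using (Zsqrtd.norm_eq_one_iff' (by norm_num) u).mpr hu
  have hreim : u.re * u.im = 0 := by nlinarith
  have hsq : u ^ 2 = ((u.re ^ 2 - u.im ^ 2 : ℤ) : ℤ[i]) := by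
    ext <;> simp [sq, Zsqrtd.re_mul, Zsqrtd.im_mul] <;> linarith
  rw [show 4 = 2 * 2 by rfl, pow_mul, hsq, ← Int.cast_pow]
  norm_cast
  linear_combination (u.re * u.re + u.im * u.im + 1) * hnorm - 4 * u.re * u.im * hreim

theorem pow_pow_eq_self_of_isUnit {u : ℤ[i]} (hu : IsUnit u) {n : ℕ} (hn : Odd n) :
    (u ^ n) ^ n = u := by
  obtain ⟨m, rfl⟩ := hn
  rw [← pow_mul, show (2 * m + 1) * (2 * m + 1) = 4 * (m * m + m) + 1 by ring, pow_succ, pow_mul,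
    pow_four_eq_one_of_isUnit hu, one_pow, one_mul]

theorem exists_pow_eq_of_isCoprime_of_mul_eq_pow {a b c : ℤ[i]} (hab : IsCoprime a b) {n : ℕ}
    (hn : Odd n) (h : a * b = c ^ n) : ∃ w : ℤ[i], w ^ n = a := by
  obtain ⟨d, u, hu⟩ := exists_associated_pow_of_mul_eq_pow' hab h
  exact ⟨d * (u : ℤ[i]) ^ n, by rw [mul_pow, pow_pow_eq_self_of_isUnit u.isUnit hn, hu]⟩

theorem isCoprime_mk_one {x : ℤ} (hx : Even x) : IsCoprime (⟨1, x⟩ : ℤ[i]) ⟨1, -x⟩ := by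
  obtain ⟨r, rfl⟩ := hx
  -- `(1 + x i) (1 - x i) = 1 + x ^ 2` and `x ^ 2 = 2 r ^ 2 ((1 + x i) + (1 - x i))`
  refine ⟨⟨1 - 2 * r ^ 2, -(r + r)⟩, ⟨-2 * r ^ 2, 0⟩, ?_⟩
  ext <;> simp [Zsqrtd.re_mul, Zsqrtd.im_mul] <;> ring

theorem mk_one_mul_mk_one_neg (x : ℤ) :
    (⟨1, x⟩ : ℤ[i]) * ⟨1, -x⟩ = ((x ^ 2 + 1 : ℤ) : ℤ[i]) := by
  ext <;> simp only [Zsqrtd.re_mul, Zsqrtd.im_mul, Zsqrtd.re_intCast, Zsqrtd.im_intCast] <;> ring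

theorem two_dvd_re_pow {z : ℤ[i]} (hre : Odd z.re) (him : Odd z.im) {n : ℕ} (hn : 2 ≤ n) :
    2 ∣ (z ^ n).re := by
  have hsq : ((2 : ℤ) : ℤ[i]) ∣ z ^ 2 := by
    obtain ⟨a, ha⟩ := hre
    obtain ⟨b, hb⟩ := him
    rw [Zsqrtd.intCast_dvd, sq, Zsqrtd.re_mul, Zsqrtd.im_mul, ha, hb]
    exact ⟨⟨2 * (a ^ 2 + a - b ^ 2 - b), by ring⟩, ⟨(2 * a + 1) * (2 * b + 1), by ring⟩⟩
  exact ((Zsqrtd.intCast_dvd _ _).mp (hsq.trans (pow_dvd_pow z hn))).1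

theorem re_mk_one_pow_modEq {c : ℤ} (hc : Even c) {n : ℕ} (hn : 2 ≤ n) :
    ((⟨1, c⟩ : ℤ[i]) ^ n).re ≡ 1 - n.choose 2 * c ^ 2
      [ZMOD 2 ^ (padicValNat 2 (n.choose 2 * c.natAbs ^ 2) + 1)] := by
  set e := padicValNat 2 (n.choose 2 * c.natAbs ^ 2) + 1
  have hterm (k : ℕ) (hk : 3 ≤ k) : (2 : ℤ) ^ e ∣ n.choose k * c ^ k := by
    rw [← Int.natAbs_dvd_natAbs]
    simp only [Int.natAbs_pow, Int.natAbs_mul, Int.natAbs_natCast]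
    exact two_pow_padicValNat_succ_dvd_choose_mul_pow (Int.natAbs_even.mpr hc).two_dvd hk
  have hlow : ∑ k ∈ Finset.range 3,
      ((c : ℤ[i]) * Zsqrtd.sqrtd) ^ k * 1 ^ (n - k) * (n.choose k : ℤ[i]) =
        ⟨1 - n.choose 2 * c ^ 2, n * c⟩ := by
    ext <;> simp [Finset.sum_range_succ, sq, Zsqrtd.re_mul, Zsqrtd.im_mul] <;> ring
  have hdvd : ((2 ^ e : ℤ) : ℤ[i]) ∣ ⟨1, c⟩ ^ n - ⟨1 - n.choose 2 * c ^ 2, n * c⟩ := by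
    have hexp : (⟨1, c⟩ : ℤ[i]) = (c : ℤ[i]) * Zsqrtd.sqrtd + 1 := by ext <;> simp
    rw [hexp, add_pow, ← Finset.sum_range_add_sum_Ico _ (by omega : 3 ≤ n + 1), hlow,
      add_sub_cancel_left]
    refine Finset.dvd_sum fun k hk => ?_
    rw [one_pow, mul_one, mul_pow, ← Int.cast_pow, mul_right_comm, ← Int.cast_natCast,
      ← Int.cast_mul, mul_comm (c ^ _)]
    exact dvd_mul_of_dvd_left (Int.cast_dvd_cast _ _ (hterm k (Finset.mem_Ico.mp hk).1)) _
  rw [Int.modEq_iff_dvd, dvd_sub_comm]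
  simpa using ((Zsqrtd.intCast_dvd _ _).mp hdvd).1

theorem im_eq_zero_of_re_eq_one_of_isUnit_re_pow {z : ℤ[i]} (hz : z.re = 1) {n : ℕ}
    (hn : 2 ≤ n) (h : IsUnit (z ^ n).re) : z.im = 0 := by
  obtain ⟨c, rfl⟩ : ∃ c, z = ⟨1, c⟩ := ⟨z.im, by ext <;> simp [hz]⟩
  rcases Int.even_or_odd c with hc | hc
  · by_contra hc0
    have hmod := re_mk_one_pow_modEq hc hn
    set N := n.choose 2 * c.natAbs ^ 2
    have hN : N ≠ 0 := Nat.mul_ne_zero (Nat.choose_pos hn).ne' (by positivity)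
    rcases Int.isUnit_iff.mp h with h1 | h1 <;> rw [h1] at hmod
    · refine pow_succ_padicValNat_not_dvd (p := 2) hN ?_
      have := hmod.dvd
      rw [← Int.natAbs_dvd_natAbs] at this
      simpa [N, Int.natAbs_mul, Int.natAbs_pow] using this
    · have hv : 1 ≤ padicValNat 2 N := one_le_padicValNat_of_dvd hN
        (dvd_mul_of_dvd_right (dvd_pow (Int.natAbs_even.mpr hc).two_dvd two_ne_zero) _)
      have h4 : (4 : ℤ) ∣ 2 ^ (padicValNat 2 N + 1) := pow_dvd_pow 2 (by omega : 2 ≤ _)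
      have := (hmod.of_dvd h4).dvd
      obtain ⟨r, rfl⟩ := hc
      rw [show 1 - (n.choose 2 : ℤ) * (r + r) ^ 2 - -1 = 2 - 4 * (n.choose 2 * r ^ 2) by ring]
        at this
      omega
  · exfalso
    have := two_dvd_re_pow (z := ⟨1, c⟩) odd_one hc hn
    rcases Int.isUnit_iff.mp h with h1 | h1 <;> rw [h1] at this <;> norm_num at this

theorem im_eq_zero_of_isUnit_re_of_isUnit_re_pow {z : ℤ[i]} (hz : IsUnit z.re) {n : ℕ}
    (hn : 2 ≤ n) (h : IsUnit (z ^ n).re) : z.im = 0 := by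
  have hsq : z.re * z.re = 1 := Int.isUnit_mul_self hz
  set w : ℤ[i] := ⟨1, z.re * z.im⟩
  have hzw : z = (z.re : ℤ[i]) * w := by
    ext <;> simp [w, ← mul_assoc, hsq]
  have hre : (z ^ n).re = z.re ^ n * (w ^ n).re := by
    conv_lhs => rw [hzw, mul_pow, ← Int.cast_pow]
    simp only [Zsqrtd.re_mul, Zsqrtd.re_intCast, Zsqrtd.im_intCast]
    ring
  rw [hre, IsUnit.mul_iff] at h
  simpa [w, hz.ne_zero] using im_eq_zero_of_re_eq_one_of_isUnit_re_pow rfl hn h.2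

end GaussianInt

theorem eq_zero_of_sq_add_one_eq_sq {x s : ℤ} (h : x ^ 2 + 1 = s ^ 2) : x = 0 := by
  have h1 : (s - x) * (s + x) = 1 := by linear_combination -h
  rcases Int.mul_eq_one_iff_eq_one_or_neg_one.mp h1 with ⟨h2, h3⟩ | ⟨h2, h3⟩ <;> omega

theorem even_of_sq_add_one_eq_pow {x y : ℤ} {n : ℕ} (hn : 2 ≤ n) (h : x ^ 2 + 1 = y ^ n) :
    Even x := by
  by_contra hx
  obtain ⟨k, rfl⟩ := Int.not_even_iff_odd.mp hx
  have hy : 2 ∣ y :=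
    Int.prime_two.dvd_of_dvd_pow (n := n) ⟨2 * k ^ 2 + 2 * k + 1, by rw [← h]; ring⟩
  have h4 : (2 : ℤ) ^ 2 ∣ (2 * k + 1) ^ 2 + 1 :=
    h ▸ (pow_dvd_pow_of_dvd hy 2).trans (pow_dvd_pow y hn)
  rw [show (2 * k + 1) ^ 2 + 1 = 4 * (k ^ 2 + k) + 2 by ring] at h4
  omega

theorem lebesgue_nagell_d_one (x y : ℤ) (n : ℕ) (hn : 2 ≤ n)
    (h : x ^ 2 + 1 = y ^ n) : x = 0 := by
  rcases Nat.even_or_odd n with ⟨m, rfl⟩ | hodd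
  · exact eq_zero_of_sq_add_one_eq_sq (s := y ^ m) (by rw [h, ← two_mul, pow_mul'])
  obtain ⟨W, hW⟩ := GaussianInt.exists_pow_eq_of_isCoprime_of_mul_eq_pow
    (GaussianInt.isCoprime_mk_one (even_of_sq_add_one_eq_pow hn h)) hodd (c := (y : ℤ[i]))
    (by rw [GaussianInt.mk_one_mul_mk_one_neg, h, Int.cast_pow])
  have hre : IsUnit W.re := isUnit_of_dvd_one (by simpa [hW] using W.re_dvd_re_pow_of_odd hodd)
  have him : W.im = 0 :=
    GaussianInt.im_eq_zero_of_isUnit_re_of_isUnit_re_pow hre hn (by rw [hW]; exact isUnit_one)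
  simpa [hW, him] using W.im_dvd_im_pow n
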